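/- Two permutations σ and μ of S_n have the same binary search tree shape (i.e., inserting the letters of σ and of μ from right to left into an initially empty binary search tree yields equal unlabelled trees) if and only if σ and μ are connected by a chain of elementary sylvester relations, where w_1 = u·ac·v·b·w and w_2 = u·ca·v·b·w are elementary related whenever a ≤ b < c. -/

import Mathlib

/-- Unlabelled binary trees. -/
inductive Tree0 where
  | leaf : Tree0
  | node : Tree0 → Tree0 → Tree0
deriving DecidableEq

/-- Labelled binary trees (labels in `ℕ`). -/
inductive BT where
  | leaf : BT
  | node : BT → ℕ → BT → BT
deriving DecidableEq

namespace BT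

/-- Binary search tree insertion: `k` goes left if `≤` the root, right if `>`. -/
def bstInsert (k : ℕ) : BT → BT
  | leaf => node leaf k leaf
  | node l x r => if k ≤ x then node (bstInsert k l) x r else node l x (bstInsert k r)

/-- Insert the letters of a word from right to left into an empty BST. -/
def abr (w : List ℕ) : BT := w.foldr bstInsert leaf

/-- Underlying unlabelled shape. -/
def shape : BT → Tree0
  | leaf => Tree0.leaf
  | node l _ r => Tree0.node (shape l) (shape r)

end BT

/-- The word of values of a permutation of `{1,…,n}`. -/
def wordOf {n : ℕ} (σ : Equiv.Perm (Fin n)) : List ℕ :=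
  List.ofFn fun i => (σ i : ℕ) + 1

/-- Elementary sylvester relation: `u·ac·v·b·w ≡ u·ca·v·b·w` whenever `a ≤ b < c`. -/
def SylvRel (w₁ w₂ : List ℕ) : Prop :=
  ∃ (u v w : List ℕ) (a b c : ℕ), a ≤ b ∧ b < c ∧
    w₁ = u ++ a :: c :: (v ++ b :: w) ∧ w₂ = u ++ c :: a :: (v ++ b :: w)

/-!
A sylvester move swaps adjacent letters `a`, `c` that are inserted after some `b` with
`a ≤ b < c`. Since `b` is already in the tree, the search paths of `a` and `c` separate at or above `b`, so the two
insertions commute and the tree does not change.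

Conversely, the tree of a word is a search tree on its letters, hence determined by its shape
and its multiset of letters. And every word `w ++ [x]` is sylvester-equivalent to the postorder
reading of its tree: the last letter `x` witnesses every swap that moves a letter `> x` to the
right of a letter `≤ x`, which separates the two subtrees; recurse on both halves.
-/

open Relation

namespace BT

def inorder : BT → List ℕ
  | leaf => []
  | node l x r => inorder l ++ x :: inorder r

def postorder : BT → List ℕ
  | leaf => []
  | node l x r => postorder l ++ postorder r ++ [x]

inductive IsSearchTree : BT → Prop
  | leaf : IsSearchTree leaf
  | node {l r : BT} {x : ℕ} : (∀ y ∈ inorder l, y ≤ x) → (∀ y ∈ inorder r, x < y) →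
      IsSearchTree l → IsSearchTree r → IsSearchTree (node l x r)

theorem inorder_bstInsert_perm (k : ℕ) (t : BT) :
    (inorder (bstInsert k t)).Perm (k :: inorder t) := by
  induction t with
  | leaf => simp [bstInsert, inorder]
  | node l x r ihl ihr =>
    by_cases h : k ≤ x
    · simpa [bstInsert, h, inorder] using ihl.append_right _
    · simp only [bstInsert, h, if_false, inorder]
      exact ((ihr.cons x).append_left _).trans (by
        simpa only [List.append_assoc, List.singleton_append] using
          List.perm_middle (l₁ := inorder l ++ [x]) (l₂ := inorder r) (a := k))

theorem mem_inorder_bstInsert {y k : ℕ} {t : BT} :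
    y ∈ inorder (bstInsert k t) ↔ y = k ∨ y ∈ inorder t := by
  simpa using (inorder_bstInsert_perm k t).mem_iff

theorem IsSearchTree.bstInsert {t : BT} (ht : IsSearchTree t) (k : ℕ) :
    IsSearchTree (bstInsert k t) := by
  induction ht with
  | leaf => exact .node (by simp [inorder]) (by simp [inorder]) .leaf .leaf
  | @node l r x hl hr htl htr ihl ihr =>
    by_cases hk : k ≤ x
    · rw [BT.bstInsert, if_pos hk]
      refine .node (fun y hy => ?_) hr ihl htr
      rcases mem_inorder_bstInsert.1 hy with rfl | hy
      exacts [hk, hl y hy]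
    · rw [BT.bstInsert, if_neg hk]
      refine .node hl (fun y hy => ?_) htl ihr
      rcases mem_inorder_bstInsert.1 hy with rfl | hy
      exacts [not_le.1 hk, hr y hy]

theorem isSearchTree_abr (w : List ℕ) : IsSearchTree (abr w) := by
  induction w with
  | nil => exact .leaf
  | cons a w ih => exact ih.bstInsert a

theorem inorder_abr_perm (w : List ℕ) : (inorder (abr w)).Perm w := by
  induction w with
  | nil => simp [abr, inorder]
  | cons a w ih => exact (inorder_bstInsert_perm a (abr w)).trans (ih.cons a)

theorem IsSearchTree.pairwise_inorder {t : BT} (ht : IsSearchTree t) :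
    (inorder t).Pairwise (· ≤ ·) := by
  induction ht with
  | leaf => simp [inorder]
  | @node l r x hl hr _ _ ihl ihr =>
    simp only [inorder, List.pairwise_append, List.pairwise_cons, List.mem_cons]
    refine ⟨ihl, ⟨fun y hy => (hr y hy).le, ihr⟩, ?_⟩
    rintro a ha b (rfl | hb)
    exacts [hl a ha, (hl a ha).trans (hr b hb).le]

theorem length_inorder_eq_of_shape_eq {s t : BT} (h : shape s = shape t) :
    (inorder s).length = (inorder t).length := by
  induction s generalizing t with
  | leaf => cases t <;> simp_all [shape]
  | node l x r ihl ihr =>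
    cases t with
    | leaf => simp [shape] at h
    | node l' x' r' =>
      simp only [shape, Tree0.node.injEq] at h
      simp [inorder, ihl h.1, ihr h.2]

theorem eq_of_shape_eq_of_inorder_eq {s t : BT} (hs : shape s = shape t)
    (hi : inorder s = inorder t) : s = t := by
  induction s generalizing t with
  | leaf => cases t <;> simp_all [shape]
  | node l x r ihl ihr =>
    cases t with
    | leaf => simp [shape] at hs
    | node l' x' r' =>
      simp only [shape, Tree0.node.injEq] at hs
      obtain ⟨hl, hxr⟩ := List.append_inj hi (length_inorder_eq_of_shape_eq hs.1)
      obtain ⟨rfl, hr⟩ := List.cons_eq_cons.1 hxr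
      rw [ihl hs.1 hl, ihr hs.2 hr]

theorem abr_eq_of_perm_of_shape_eq {w₁ w₂ : List ℕ} (hw : w₁.Perm w₂)
    (hs : shape (abr w₁) = shape (abr w₂)) : abr w₁ = abr w₂ :=
  eq_of_shape_eq_of_inorder_eq hs <|
    (((inorder_abr_perm w₁).trans hw).trans (inorder_abr_perm w₂).symm).eq_of_pairwise'
      (isSearchTree_abr w₁).pairwise_inorder (isSearchTree_abr w₂).pairwise_inorder

theorem IsSearchTree.bstInsert_comm {a b c : ℕ} (hab : a ≤ b) (hbc : b < c) {t : BT}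
    (ht : IsSearchTree t) (hb : b ∈ inorder t) :
    BT.bstInsert a (BT.bstInsert c t) = BT.bstInsert c (BT.bstInsert a t) := by
  induction ht with
  | leaf => simp [inorder] at hb
  | @node l r x hl hr _ _ ihl ihr =>
    simp only [inorder, List.mem_append, List.mem_cons] at hb
    by_cases hcx : c ≤ x
    · have hbl : b ∈ inorder l := by
        rcases hb with hb | rfl | hb
        exacts [hb, by omega, absurd (hr b hb) (by omega)]
      simp [BT.bstInsert, hcx, hab.trans (hbc.le.trans hcx), ihl hbl]
    · by_cases hax : a ≤ x
      · simp [BT.bstInsert, hax, hcx]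
      · have hbr : b ∈ inorder r := by
          rcases hb with hb | rfl | hb
          exacts [absurd (hl b hb) (by omega), by omega, hb]
        simp [BT.bstInsert, hcx, hax, ihr hbr]

theorem abr_eq_of_sylvRel {w₁ w₂ : List ℕ} (h : SylvRel w₁ w₂) : abr w₁ = abr w₂ := by
  obtain ⟨u, v, w, a, b, c, hab, hbc, rfl, rfl⟩ := h
  rw [abr, abr, List.foldr_append, List.foldr_append]
  congr 1
  exact (isSearchTree_abr _).bstInsert_comm hab hbc ((inorder_abr_perm _).mem_iff.2 (by simp))

theorem abr_eq_of_eqvGen_sylvRel {w₁ w₂ : List ℕ} (h : EqvGen SylvRel w₁ w₂) :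
    abr w₁ = abr w₂ := by
  induction h with
  | rel _ _ h => exact abr_eq_of_sylvRel h
  | refl => rfl
  | symm _ _ _ ih => exact ih.symm
  | trans _ _ _ _ _ ih₁ ih₂ => exact ih₁.trans ih₂

theorem foldr_bstInsert_node (w : List ℕ) (l r : BT) (x : ℕ) :
    w.foldr bstInsert (node l x r) =
      node ((w.filter (· ≤ x)).foldr bstInsert l) x ((w.filter (x < ·)).foldr bstInsert r) := by
  induction w with
  | nil => rfl
  | cons a w ih =>
    by_cases h : a ≤ x
    · simp [h, ih, bstInsert]
    · simp [h, ih, bstInsert, not_le.1 h]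

theorem abr_append_singleton (w : List ℕ) (x : ℕ) :
    abr (w ++ [x]) = node (abr (w.filter (· ≤ x))) x (abr (w.filter (x < ·))) := by
  rw [abr, List.foldr_append]
  exact foldr_bstInsert_node w leaf leaf x

end BT

theorem SylvRel.append_append {w₁ w₂ : List ℕ} (p s : List ℕ) (h : SylvRel w₁ w₂) :
    SylvRel (p ++ w₁ ++ s) (p ++ w₂ ++ s) := by
  obtain ⟨u, v, w, a, b, c, hab, hbc, rfl, rfl⟩ := h
  exact ⟨p ++ u, v, w ++ s, a, b, c, hab, hbc, by simp, by simp⟩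

theorem eqvGen_sylvRel_append_append {w₁ w₂ : List ℕ} (p s : List ℕ)
    (h : EqvGen SylvRel w₁ w₂) : EqvGen SylvRel (p ++ w₁ ++ s) (p ++ w₂ ++ s) := by
  induction h with
  | rel _ _ h => exact .rel _ _ (h.append_append p s)
  | refl => exact .refl _
  | symm _ _ _ ih => exact .symm _ _ ih
  | trans _ _ _ _ _ ih₁ ih₂ => exact .trans _ _ _ ih₁ ih₂

theorem eqvGen_sylvRel_cons_append {b c : ℕ} (hbc : b < c) {t : List ℕ} (hb : b ∈ t) :
    ∀ L : List ℕ, (∀ a ∈ L, a ≤ b) → EqvGen SylvRel (c :: (L ++ t)) (L ++ c :: t)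
  | [], _ => .refl _
  | a :: L, hL => by
    obtain ⟨v, w, rfl⟩ := List.append_of_mem hb
    have hswap : SylvRel (a :: c :: (L ++ v ++ b :: w)) (c :: a :: (L ++ v ++ b :: w)) :=
      ⟨[], L ++ v, w, a, b, c, hL a (by simp), hbc, by simp, by simp⟩
    have hrest := eqvGen_sylvRel_append_append [a] []
      (eqvGen_sylvRel_cons_append hbc hb L fun a' ha' => hL a' (by simp [ha']))
    simp only [List.singleton_append, List.append_nil] at hrest
    exact .trans _ _ _ (.symm _ _ (.rel _ _ (by simpa using hswap))) (by simpa using hrest)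

theorem eqvGen_sylvRel_filter_append {x : ℕ} {t : List ℕ} (hx : x ∈ t) :
    ∀ w : List ℕ, EqvGen SylvRel (w ++ t) (w.filter (· ≤ x) ++ w.filter (x < ·) ++ t)
  | [] => .refl _
  | y :: w => by
    have ih := eqvGen_sylvRel_append_append [y] [] (eqvGen_sylvRel_filter_append hx w)
    simp only [List.singleton_append, List.append_nil] at ih
    by_cases hy : y ≤ x
    · simpa [List.filter_cons, hy] using ih
    · have hmove := eqvGen_sylvRel_cons_append (not_le.1 hy)
        (List.mem_append_right (w.filter (x < ·)) hx) (w.filter (· ≤ x))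
        (fun a ha => by simpa using List.of_mem_filter ha)
      simpa [List.filter_cons, hy, not_le.1 hy] using ih.trans _ _ _ (by simpa using hmove)

theorem eqvGen_sylvRel_postorder_abr (w : List ℕ) :
    EqvGen SylvRel w (BT.postorder (BT.abr w)) := by
  rcases List.eq_nil_or_concat w with rfl | ⟨w', x, hw⟩
  · exact .refl _
  rw [hw, List.concat_eq_append, BT.abr_append_singleton, BT.postorder]
  have hsplit := eqvGen_sylvRel_filter_append (List.mem_singleton_self x) w'
  have hleft := eqvGen_sylvRel_append_append [] (w'.filter (x < ·) ++ [x])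
    (eqvGen_sylvRel_postorder_abr (w'.filter (· ≤ x)))
  have hright := eqvGen_sylvRel_append_append (BT.postorder (BT.abr (w'.filter (· ≤ x)))) [x]
    (eqvGen_sylvRel_postorder_abr (w'.filter (x < ·)))
  simp only [List.nil_append, List.append_assoc] at hsplit hleft hright ⊢
  exact (hsplit.trans _ _ _ hleft).trans _ _ _ hright
termination_by w.length
decreasing_by all_goals simpa [hw] using Nat.lt_succ_of_le (List.length_filter_le _ _)

theorem shape_abr_eq_iff_eqvGen_sylvRel {w₁ w₂ : List ℕ} (hw : w₁.Perm w₂) :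
    BT.shape (BT.abr w₁) = BT.shape (BT.abr w₂) ↔ EqvGen SylvRel w₁ w₂ := by
  refine ⟨fun hs => ?_, fun h => congrArg BT.shape (BT.abr_eq_of_eqvGen_sylvRel h)⟩
  have htree := BT.abr_eq_of_perm_of_shape_eq hw hs
  exact .trans _ _ _ (eqvGen_sylvRel_postorder_abr w₁)
    (.symm _ _ (htree ▸ eqvGen_sylvRel_postorder_abr w₂))

theorem wordOf_perm {n : ℕ} (σ μ : Equiv.Perm (Fin n)) : (wordOf σ).Perm (wordOf μ) :=
  (σ.ofFn_comp_perm (fun i => (i : ℕ) + 1)).trans (μ.ofFn_comp_perm _).symm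

/-- Two permutations have the same binary search tree shape (inserting
their letters from right to left) iff they are connected by a chain of elementary
sylvester relations. -/
theorem same_bst_iff_sylvester (n : ℕ) (σ μ : Equiv.Perm (Fin n)) :
    BT.shape (BT.abr (wordOf σ)) = BT.shape (BT.abr (wordOf μ)) ↔
      Relation.ReflTransGen (fun x y => SylvRel x y ∨ SylvRel y x)
        (wordOf σ) (wordOf μ) := by
  change _ ↔ ReflTransGen (SymmGen SylvRel) _ _
  rw [EqvGen.reflTransGen_symmGen]
  exact shape_abr_eq_iff_eqvGen_sylvRel (wordOf_perm σ μ)
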